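/- arXiv:2410.18513 — 2 statements merged into one kernel-verified Lean document; each statement's English description precedes it below -/
import Mathlib

section
/- Let the sequence (τ_k) be defined by τ_1 = 1 and τ_{k+1} = (τ_k/2)(√(τ_k² + 4) - τ_k). Then for every k ≥ 1, 1/(k+1) ≤ τ_k ≤ 2/(k+1). -/
/-!
Writing `f t = (t / 2) * (√(t² + 4) - t)`, rationalising gives `f t * (√(t² + 4) + t) = 2 t`, so
`1 / f t = 1 / 2 + √(t² + 4) / (2 t)`. Since `2 ≤ √(t² + 4) ≤ t + 2`, each step increases `1 / τ`
by between `1 / 2` and `1`; starting from `1 / τ₁ = 1` this gives `(k + 1) / 2 ≤ 1 / τ_k ≤ k`.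
-/

open Real

noncomputable def tauStep (t : ℝ) : ℝ := t / 2 * (√(t ^ 2 + 4) - t)

lemma tauStep_mul_sqrt_add (t : ℝ) : tauStep t * (√(t ^ 2 + 4) + t) = 2 * t := by
  have hsq : √(t ^ 2 + 4) ^ 2 = t ^ 2 + 4 := sq_sqrt (by positivity)
  unfold tauStep
  linear_combination t / 2 * hsq

lemma two_le_sqrt_sq_add_four (t : ℝ) : 2 ≤ √(t ^ 2 + 4) :=
  le_sqrt_of_sq_le (by nlinarith)

lemma sqrt_sq_add_four_le {t : ℝ} (ht : 0 ≤ t) : √(t ^ 2 + 4) ≤ t + 2 :=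
  sqrt_le_iff.mpr ⟨by positivity, by nlinarith⟩

lemma inv_tauStep {t : ℝ} (ht : 0 < t) : (tauStep t)⁻¹ = 1 / 2 + √(t ^ 2 + 4) / (2 * t) := by
  have hsum : 0 < √(t ^ 2 + 4) + t := by linarith [two_le_sqrt_sq_add_four t]
  have hstep : tauStep t = 2 * t / (√(t ^ 2 + 4) + t) := by
    rw [eq_div_iff hsum.ne', tauStep_mul_sqrt_add]
  rw [hstep, inv_div]
  field_simp
  ring

lemma tauStep_pos {t : ℝ} (ht : 0 < t) : 0 < tauStep t := by
  have hinv : 0 < (tauStep t)⁻¹ := by rw [inv_tauStep ht]; positivity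
  exact inv_pos.mp hinv

lemma inv_add_half_le_inv_tauStep {t : ℝ} (ht : 0 < t) : t⁻¹ + 1 / 2 ≤ (tauStep t)⁻¹ := by
  have h : t⁻¹ ≤ √(t ^ 2 + 4) / (2 * t) := by
    rw [inv_eq_one_div, div_le_div_iff₀ ht (by positivity)]
    nlinarith [two_le_sqrt_sq_add_four t]
  rw [inv_tauStep ht]
  linarith

lemma inv_tauStep_le_inv_add_one {t : ℝ} (ht : 0 < t) : (tauStep t)⁻¹ ≤ t⁻¹ + 1 := by
  have h : √(t ^ 2 + 4) / (2 * t) ≤ t⁻¹ + 1 / 2 := by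
    rw [div_le_iff₀ (by positivity)]
    have : (t⁻¹ + 1 / 2) * (2 * t) = t + 2 := by field_simp; ring
    rw [this]
    exact sqrt_sq_add_four_le ht.le
  rw [inv_tauStep ht]
  linarith

lemma pos_and_inv_bounds_of_tauStep (τ : ℕ → ℝ) (h1 : τ 1 = 1)
    (hrec : ∀ k : ℕ, 1 ≤ k → τ (k + 1) = tauStep (τ k)) :
    ∀ k : ℕ, 1 ≤ k → 0 < τ k ∧ ((k : ℝ) + 1) / 2 ≤ (τ k)⁻¹ ∧ (τ k)⁻¹ ≤ k := by
  intro k hk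
  induction k, hk using Nat.le_induction with
  | base => norm_num [h1]
  | succ k hk ih =>
    obtain ⟨hpos, hlo, hhi⟩ := ih
    rw [hrec k hk]
    push_cast
    refine ⟨tauStep_pos hpos, ?_, ?_⟩
    · linarith [inv_add_half_le_inv_tauStep hpos]
    · linarith [inv_tauStep_le_inv_add_one hpos]

theorem tau_bounds (τ : ℕ → ℝ)
    (h1 : τ 1 = 1)
    (hrec : ∀ k : ℕ, 1 ≤ k → τ (k + 1) = (τ k / 2) * (Real.sqrt (τ k ^ 2 + 4) - τ k)) :
    ∀ k : ℕ, 1 ≤ k → 1 / ((k : ℝ) + 1) ≤ τ k ∧ τ k ≤ 2 / ((k : ℝ) + 1) := by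
  intro k hk
  obtain ⟨hpos, hlo, hhi⟩ := pos_and_inv_bounds_of_tauStep τ h1 hrec k hk
  constructor
  · calc 1 / ((k : ℝ) + 1) ≤ ((τ k)⁻¹)⁻¹ := by
          rw [one_div]; exact inv_anti₀ (inv_pos.mpr hpos) (by linarith)
      _ = τ k := inv_inv _
  · calc τ k = ((τ k)⁻¹)⁻¹ := (inv_inv _).symm
      _ ≤ (((k : ℝ) + 1) / 2)⁻¹ := inv_anti₀ (by positivity) hlo
      _ = 2 / ((k : ℝ) + 1) := inv_div _ _
end

section
/- Let λ ≥ 0, D > 0 and ẍ ∈ ℝ^n. Let x₀ᵘ ∈ ℝ^n be defined componentwise by (x₀ᵘ)_i = sign(ẍ_i)·max(|ẍ_i| - λ, 0). Then the minimizer of λ‖x‖₁ + (1/2)‖x - ẍ‖² over the Euclidean ball {x : ‖x‖ ≤ D} is x* = min(1, D/‖x₀ᵘ‖) · x₀ᵘ (with x* = 0 when x₀ᵘ = 0). -/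
/-!
Write x* = x₀ᵘ / (1 + μ) with a multiplier μ ≥ 0 that vanishes unless ‖x*‖ = D. Since
ẍᵢ - (1 + μ) x*ᵢ is λ times a subgradient of |·| at x*ᵢ, each x*ᵢ minimises
λ|y| + ½(y - ẍᵢ)² + (μ/2) y². Summing, x* minimises the Lagrangian
λ‖x‖₁ + ½‖x - ẍ‖² + (μ/2)‖x‖², and on the ball the penalty (μ/2)‖x‖² is at most its value at x*.
-/

noncomputable def softThreshold (lam a : ℝ) : ℝ := Real.sign a * max (|a| - lam) 0

theorem exists_subgradient_softThreshold {lam : ℝ} (hlam : 0 ≤ lam) (a : ℝ) :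
    ∃ t : ℝ, |t| ≤ 1 ∧ t * softThreshold lam a = |softThreshold lam a| ∧
      a - softThreshold lam a = lam * t := by
  unfold softThreshold
  rcases le_or_gt |a| lam with hsmall | hlarge
  · rw [max_eq_right (sub_nonpos.2 hsmall), mul_zero]
    -- for `lam = 0` this picks `a / 0 = 0`, which is fine since then `a = 0`
    refine ⟨a / lam, ?_, by simp, ?_⟩
    · rw [abs_div, abs_of_nonneg hlam]
      exact div_le_one_of_le₀ hsmall hlam
    · rcases hlam.eq_or_lt with rfl | hpos
      · simpa using abs_nonpos_iff.1 hsmall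
      · rw [sub_zero, mul_div_cancel₀ a hpos.ne']
  · rw [max_eq_left (sub_nonneg.2 hlarge.le)]
    rcases lt_trichotomy a 0 with ha | rfl | ha
    · rw [abs_of_neg ha] at hlarge ⊢
      refine ⟨-1, by norm_num, ?_, by rw [Real.sign_of_neg ha]; ring⟩
      rw [Real.sign_of_neg ha, abs_of_nonpos (by linarith)]; ring
    · rw [abs_zero] at hlarge; linarith
    · rw [abs_of_pos ha] at hlarge ⊢
      refine ⟨1, by norm_num, ?_, by rw [Real.sign_of_pos ha]; ring⟩
      rw [Real.sign_of_pos ha, abs_of_nonneg (by linarith)]; ring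

theorem abs_add_sq_le_of_subgradient {lam mu a s t : ℝ} (hlam : 0 ≤ lam) (hmu : -1 ≤ mu)
    (ht : |t| ≤ 1) (hts : t * s = |s|) (hsub : a - (1 + mu) * s = lam * t) (y : ℝ) :
    lam * |s| + (1 / 2) * (s - a) ^ 2 + (mu / 2) * s ^ 2 ≤
      lam * |y| + (1 / 2) * (y - a) ^ 2 + (mu / 2) * y ^ 2 := by
  have hty : t * y ≤ |y| := (le_abs_self _).trans ((abs_mul t y).trans_le
    (mul_le_of_le_one_left (abs_nonneg y) ht))
  obtain rfl : a = (1 + mu) * s + lam * t := by linarith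
  have hgap : 0 ≤ lam * (|y| - t * y) + (1 + mu) / 2 * (y - s) ^ 2 := by
    have : 0 ≤ 1 + mu := by linarith
    have : 0 ≤ |y| - t * y := sub_nonneg.2 hty
    positivity
  calc lam * |s| + (1 / 2) * (s - ((1 + mu) * s + lam * t)) ^ 2 + (mu / 2) * s ^ 2
      = lam * |y| + (1 / 2) * (y - ((1 + mu) * s + lam * t)) ^ 2 + (mu / 2) * y ^ 2 -
          (lam * (|y| - t * y) + (1 + mu) / 2 * (y - s) ^ 2) := by rw [← hts]; ring
    _ ≤ _ := sub_le_self _ hgap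

theorem sum_abs_add_norm_sq_le_of_softThreshold {ι : Type*} [Fintype ι] {lam mu : ℝ}
    (hlam : 0 ≤ lam) (hmu : -1 < mu) {a s : EuclideanSpace ℝ ι}
    (hs : ∀ i, (1 + mu) * s i = softThreshold lam (a i)) (y : EuclideanSpace ℝ ι) :
    lam * ∑ i, |s i| + (1 / 2) * ‖s - a‖ ^ 2 + (mu / 2) * ‖s‖ ^ 2 ≤
      lam * ∑ i, |y i| + (1 / 2) * ‖y - a‖ ^ 2 + (mu / 2) * ‖y‖ ^ 2 := by
  have hpos : 0 < 1 + mu := by linarith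
  have hcoord : ∀ i, lam * |s i| + (1 / 2) * (s i - a i) ^ 2 + (mu / 2) * s i ^ 2 ≤
      lam * |y i| + (1 / 2) * (y i - a i) ^ 2 + (mu / 2) * y i ^ 2 := by
    intro i
    obtain ⟨t, ht, hts, hsub⟩ := exists_subgradient_softThreshold hlam (a i)
    rw [← hs i, abs_mul, abs_of_pos hpos, mul_left_comm, mul_left_cancel_iff_of_pos hpos] at hts
    rw [← hs i] at hsub
    exact abs_add_sq_le_of_subgradient hlam hmu.le ht hts hsub (y i)
  simpa only [EuclideanSpace.real_norm_sq_eq, PiLp.sub_apply, Finset.mul_sum,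
    ← Finset.sum_add_distrib] using Finset.sum_le_sum fun i _ => hcoord i

section RadialProjection

variable {E : Type*} [NormedAddCommGroup E] [NormedSpace ℝ E] {D : ℝ}

theorem norm_min_one_div_smul_le (hD : 0 ≤ D) (v : E) : ‖min 1 (D / ‖v‖) • v‖ ≤ D := by
  rcases (norm_nonneg v).eq_or_lt with hv | hv
  · simpa [← hv] using hD
  · rw [norm_smul, Real.norm_of_nonneg (le_min zero_le_one (by positivity))]
    calc min 1 (D / ‖v‖) * ‖v‖ ≤ D / ‖v‖ * ‖v‖ := by gcongr; exact min_le_right _ _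
      _ = D := div_mul_cancel₀ D hv.ne'

theorem exists_one_add_smul_min_one_div_smul_eq (hD : 0 < D) (v : E) :
    ∃ mu : ℝ, 0 ≤ mu ∧ (1 + mu) • (min 1 (D / ‖v‖) • v) = v ∧
      (mu = 0 ∨ ‖min 1 (D / ‖v‖) • v‖ = D) := by
  rcases le_or_gt ‖v‖ D with hin | hout
  · refine ⟨0, le_rfl, ?_, Or.inl rfl⟩
    rcases (norm_nonneg v).eq_or_lt with hv | hv
    · simp [norm_eq_zero.1 hv.symm]
    · rw [min_eq_left ((one_le_div hv).2 hin), add_zero, one_smul, one_smul]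
  · have hv : 0 < ‖v‖ := hD.trans hout
    rw [min_eq_right ((div_le_one hv).2 hout.le)]
    refine ⟨‖v‖ / D - 1, by linarith [(one_le_div hD).2 hout.le], ?_, Or.inr ?_⟩
    · rw [smul_smul, add_sub_cancel, div_mul_div_cancel₀ hD.ne', div_self hv.ne', one_smul]
    · rw [norm_smul, Real.norm_of_nonneg (by positivity), div_mul_cancel₀ D hv.ne']

end RadialProjection

theorem l1_prox_on_l2_ball (n : ℕ) (lam D : ℝ) (hlam : 0 ≤ lam) (hD : 0 < D)
    (xdd x0u xstar : EuclideanSpace ℝ (Fin n))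
    (hx0u : ∀ i, x0u i = Real.sign (xdd i) * max (|xdd i| - lam) 0)
    (hxstar : xstar = min 1 (D / ‖x0u‖) • x0u) :
    ‖xstar‖ ≤ D ∧
    ∀ x : EuclideanSpace ℝ (Fin n), ‖x‖ ≤ D →
      lam * (∑ i, |xstar i|) + (1 / 2) * ‖xstar - xdd‖ ^ 2 ≤
        lam * (∑ i, |x i|) + (1 / 2) * ‖x - xdd‖ ^ 2 := by
  subst hxstar
  refine ⟨norm_min_one_div_smul_le hD.le x0u, fun x hx => ?_⟩
  obtain ⟨mu, hmu, hscale, hslack⟩ := exists_one_add_smul_min_one_div_smul_eq hD x0u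
  have hs : ∀ i, (1 + mu) * (min 1 (D / ‖x0u‖) • x0u) i = softThreshold lam (xdd i) := by
    intro i
    rw [← smul_eq_mul, ← PiLp.smul_apply, hscale, hx0u i, softThreshold]
  have hlagrange := sum_abs_add_norm_sq_le_of_softThreshold hlam (by linarith) hs x
  have hpenalty : mu / 2 * ‖x‖ ^ 2 ≤ mu / 2 * ‖min 1 (D / ‖x0u‖) • x0u‖ ^ 2 := by
    rcases hslack with rfl | hactive
    · simp
    · rw [hactive]; gcongr
  linarith
end
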